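/- Let V be a finite planar reduced rooted tree and let I ⊆ J ⊆ L(V) with I and J nonempty. Let ι : J → L(V|J) be the unique order-preserving bijection (which exists since V|J has exactly #J leaves). Then (V|J)|ι(I) = V|I. -/

import Mathlib

inductive PTree : Type where
  | node : List PTree → PTree

namespace PTree

/-- the single-vertex tree -/
def x : PTree := node []

/-- the number of leaves of a tree -/
def deg : PTree → ℕ
  | node l => max 1 (l.attach.map fun t => deg t.1).sum
decreasing_by
  have := List.sizeOf_lt_of_mem t.2
  simp; omega

/-- a tree is reduced if no vertex has arity 1 -/
inductive Reduced : PTree → Prop where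
  | node (l : List PTree) (hlen : l.length ≠ 1) (h : ∀ t ∈ l, Reduced t) :
      Reduced (node l)

/-- the reduction of a tree -/
def red : PTree → PTree
  | node [t] => red t
  | node l => node (l.attach.map fun t => red t.1)
decreasing_by
  · simp; omega
  · have := List.sizeOf_lt_of_mem t.2
    simp; omega

mutual
/-- the spanning subtree `T_I` determined by a set `I ⊆ range (deg T)` of leaf positions
(counted from the left, starting at `0`) -/
def sub : PTree → Finset ℕ → PTree
  | node l, I => node (subList l I)
/-- auxiliary: the list of spanning subtrees of the children, children without
selected leaves being dropped -/
def subList : List PTree → Finset ℕ → List PTree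
  | [], _ => []
  | t :: ts, I =>
      (if (I.filter (· < t.deg)).Nonempty then [sub t (I.filter (· < t.deg))] else [])
        ++ subList ts ((I.filter fun j => t.deg ≤ j).image fun j => j - t.deg)
end

/-- the contraction `T|I`: the reduction of the spanning subtree, `1` (i.e. `none`) if `I = ∅` -/
def contract (T : PTree) (I : Finset ℕ) : Option PTree :=
  if I = ∅ then none else some (red (sub T I))

end PTree

/-- `PRT'`: finite planar rooted trees together with the empty tree `1 = none` -/
abbrev OT := Option PTree

/-- `deg` on `PRT'` -/
def degO (o : OT) : ℕ := o.elim 0 PTree.deg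

/-- membership in `PRT'` = reduced trees together with the empty tree `1` -/
def ROT (o : OT) : Prop := ∀ t, o = some t → t.Reduced

/-- contraction on `PRT'` -/
def contractO : OT → Finset ℕ → OT
  | none, _ => none
  | some t, I => PTree.contract t I

/-! Reduction only deletes unary vertices and keeps the left-to-right order of the leaves, so
it commutes with taking spanning subtrees up to a further reduction:
`red (sub (red T) I) = red (sub T I)`. Hence `(V|J)|ι(I) = red (sub (sub V J) (ι I))`, and it
remains to see that spanning is transitive, `sub (sub V J) (ι I) = sub V I`. This goes child
by child: on a child whose leaves occupy the positions `[d, d + e)`, the map `ι` is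
`#(J ∩ [0, d))` plus the `ι` of the part of `J` inside that child. -/

namespace PTree

/-- Leaf positions of `I` seen from a subtree whose leaves start at position `d`. -/
def shift (d : ℕ) (I : Finset ℕ) : Finset ℕ :=
  (I.filter fun j => d ≤ j).image fun j => j - d

theorem mem_shift {d n : ℕ} {I : Finset ℕ} : n ∈ shift d I ↔ d + n ∈ I := by
  simp only [shift, Finset.mem_image, Finset.mem_filter]
  constructor
  · rintro ⟨b, ⟨hb, hdb⟩, rfl⟩
    rwa [Nat.add_sub_cancel' hdb]
  · exact fun h => ⟨d + n, ⟨h, by omega⟩, by omega⟩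

theorem shift_zero (I : Finset ℕ) : shift 0 I = I := by
  ext n
  rw [mem_shift, zero_add]

theorem shift_mono {d : ℕ} {I J : Finset ℕ} (h : I ⊆ J) : shift d I ⊆ shift d J :=
  fun _ hn => mem_shift.mpr (h (mem_shift.mp hn))

/-- The map `ι` of the statement: it numbers the elements of `J` from the left. -/
def rank (J : Finset ℕ) (a : ℕ) : ℕ := (J.filter (· < a)).card

theorem rank_eq_count (J : Finset ℕ) (a : ℕ) : rank J a = Nat.count (· ∈ J) a := by
  rw [Nat.count_eq_card_filter_range, rank]
  congr 1
  ext b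
  simp only [Finset.mem_filter, Finset.mem_range]
  exact and_comm

theorem rank_le (J : Finset ℕ) (a : ℕ) : rank J a ≤ a := by
  simpa only [rank_eq_count] using Nat.count_le _

theorem rank_mono (J : Finset ℕ) : Monotone (rank J) := by
  simpa only [funext (rank_eq_count J)] using Nat.count_monotone _

theorem rank_lt_rank {J : Finset ℕ} {a b : ℕ} (ha : a ∈ J) (hab : a < b) :
    rank J a < rank J b := by
  simpa only [rank_eq_count] using Nat.count_strict_mono ha hab

theorem rank_lt_rank_iff {J : Finset ℕ} {a b : ℕ} (ha : a ∈ J) :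
    rank J a < rank J b ↔ a < b :=
  ⟨fun h => lt_of_not_ge fun hba => (rank_mono J hba).not_gt h, rank_lt_rank ha⟩

theorem rank_add (J : Finset ℕ) (d m : ℕ) : rank J (d + m) = rank J d + rank (shift d J) m := by
  simp only [rank_eq_count, Nat.count_add, mem_shift]

theorem rank_filter_lt {J : Finset ℕ} {a d : ℕ} (h : a ≤ d) :
    rank (J.filter (· < d)) a = rank J a := by
  rw [rank, rank, Finset.filter_filter]
  congr 1
  exact Finset.filter_congr fun b _ => by omega

theorem filter_image_rank {I J : Finset ℕ} (hIJ : I ⊆ J) (d : ℕ) :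
    (I.image (rank J)).filter (· < rank J d)
      = (I.filter (· < d)).image (rank (J.filter (· < d))) := by
  ext k
  simp only [Finset.mem_filter, Finset.mem_image]
  constructor
  · rintro ⟨⟨a, ha, rfl⟩, hlt⟩
    have had := (rank_lt_rank_iff (hIJ ha)).mp hlt
    exact ⟨a, ⟨ha, had⟩, rank_filter_lt had.le⟩
  · rintro ⟨a, ⟨ha, had⟩, rfl⟩
    rw [rank_filter_lt had.le]
    exact ⟨⟨a, ha, rfl⟩, rank_lt_rank (hIJ ha) had⟩

theorem shift_image_rank {I J : Finset ℕ} (hIJ : I ⊆ J) (d : ℕ) :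
    shift (rank J d) (I.image (rank J)) = (shift d I).image (rank (shift d J)) := by
  ext k
  simp only [mem_shift, Finset.mem_image]
  constructor
  · rintro ⟨a, ha, hk⟩
    have hda : d ≤ a := by
      by_contra! had
      have := rank_lt_rank (hIJ ha) had
      omega
    obtain ⟨m, rfl⟩ := Nat.exists_eq_add_of_le hda
    rw [rank_add] at hk
    exact ⟨m, ha, by omega⟩
  · rintro ⟨m, hm, rfl⟩
    exact ⟨d + m, hm, rank_add J d m⟩

theorem deg_node (l : List PTree) : deg (node l) = max 1 (l.map deg).sum := by
  rw [deg, List.attach_map_val]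

theorem one_le_deg (T : PTree) : 1 ≤ T.deg := by
  match T with
  | node l => rw [deg_node]; exact le_max_left _ _

theorem red_single (t : PTree) : red (node [t]) = red t := by rw [red]

theorem red_node {l : List PTree} (h : l.length ≠ 1) : red (node l) = node (l.map red) := by
  rw [red.eq_def]
  match l, h with
  | [], _ => rfl
  | _ :: _ :: _, _ => exact congrArg node List.attach_map_val

theorem red_congr {A B : List PTree} (h : A.map red = B.map red) :
    red (node A) = red (node B) := by
  have hlen : A.length = B.length := by simpa using congrArg List.length h
  by_cases hA : A.length = 1
  · obtain ⟨a, rfl⟩ := List.length_eq_one_iff.mp hA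
    obtain ⟨b, rfl⟩ := List.length_eq_one_iff.mp (hlen ▸ hA)
    simpa [red_single] using h
  · rw [red_node hA, red_node (hlen ▸ hA), h]

mutual
theorem deg_red (T : PTree) : deg (red T) = deg T := by
  match T with
  | node [t] =>
    rw [red_single, deg_red t, deg_node]
    simp [one_le_deg]
  | node [] => rw [red_node (by simp)]; rfl
  | node (a :: b :: ts) =>
    rw [red_node (by simp), deg_node, deg_node, List.map_map, sum_deg_map_red]
theorem sum_deg_map_red (l : List PTree) : (l.map (deg ∘ red)).sum = (l.map deg).sum := by
  match l with
  | [] => rfl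
  | t :: ts =>
    rw [List.map_cons, List.map_cons, List.sum_cons, List.sum_cons, Function.comp_apply,
      deg_red t, sum_deg_map_red ts]
end

theorem sub_node (l : List PTree) (I : Finset ℕ) : sub (node l) I = node (subList l I) := by
  rw [sub]

theorem subList_nil (I : Finset ℕ) : subList [] I = [] := by rw [subList]

theorem subList_cons (t : PTree) (ts : List PTree) (I : Finset ℕ) :
    subList (t :: ts) I =
      (if (I.filter (· < t.deg)).Nonempty then [sub t (I.filter (· < t.deg))] else [])
        ++ subList ts (shift t.deg I) := by
  rw [subList]; rfl

theorem subList_congr {l : List PTree} {I J : Finset ℕ}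
    (h : ∀ n < (l.map deg).sum, n ∈ I ↔ n ∈ J) : subList l I = subList l J := by
  induction l generalizing I J with
  | nil => rw [subList_nil, subList_nil]
  | cons t ts ih =>
    simp only [List.map_cons, List.sum_cons] at h
    have hhead : I.filter (· < t.deg) = J.filter (· < t.deg) := by
      ext n
      simp only [Finset.mem_filter]
      exact and_congr_left fun hn => h n (by omega)
    have htail : subList ts (shift t.deg I) = subList ts (shift t.deg J) :=
      ih fun n hn => by rw [mem_shift, mem_shift]; exact h _ (by omega)
    rw [subList_cons, subList_cons, hhead, htail]

theorem sub_filter_lt_deg (T : PTree) (I : Finset ℕ) : sub T (I.filter (· < T.deg)) = sub T I := by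
  match T with
  | node l =>
    rw [sub_node, sub_node, deg_node]
    exact congrArg node <| subList_congr fun n hn => by simp [Finset.mem_filter]; omega

theorem sub_empty (T : PTree) : sub T ∅ = node [] := by
  match T with
  | node l =>
    rw [sub_node]
    induction l with
    | nil => rw [subList_nil]
    | cons t ts ih =>
      rw [subList_cons, Finset.filter_empty, if_neg Finset.not_nonempty_empty, List.nil_append]
      simpa [shift] using ih

mutual
theorem deg_sub (T : PTree) (I : Finset ℕ) : (sub T I).deg = max 1 (rank I T.deg) := by
  match T with
  | node [] =>
    have := rank_le I 1
    rw [sub_node, subList_nil, deg_node]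
    simp only [List.map_nil, List.sum_nil, Nat.max_zero]
    omega
  | node (t :: ts) =>
    have hpos : 1 ≤ ((t :: ts).map deg).sum := by
      simpa using (one_le_deg t).trans (Nat.le_add_right _ _)
    rw [sub_node, deg_node, deg_node, sum_deg_subList, max_eq_right hpos]
theorem sum_deg_subList (l : List PTree) (I : Finset ℕ) :
    ((subList l I).map deg).sum = rank I (l.map deg).sum := by
  match l with
  | [] => rw [subList_nil]; simp [rank]
  | t :: ts =>
    rw [subList_cons, List.map_append, List.sum_append, sum_deg_subList ts, List.map_cons,
      List.sum_cons, rank_add]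
    congr 1
    split_ifs with h
    · rw [List.map_singleton, List.sum_singleton, deg_sub, rank_filter_lt le_rfl,
        max_eq_right h.card_pos]
    · simp [rank, Finset.not_nonempty_iff_eq_empty.mp h]
end

mutual
theorem red_sub_red (T : PTree) (I : Finset ℕ) : red (sub (red T) I) = red (sub T I) := by
  match T with
  | node [t] =>
    rw [red_single, sub_node, subList_cons, subList_nil, List.append_nil,
      ← sub_filter_lt_deg (red t), deg_red]
    split_ifs with h
    · rw [red_single, red_sub_red t]
    · rw [Finset.not_nonempty_iff_eq_empty.mp h, sub_empty]
  | node [] => rw [red_node (by simp), List.map_nil]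
  | node (a :: b :: ts) =>
    rw [red_node (by simp), sub_node, sub_node]
    exact red_congr (map_red_subList_map_red (a :: b :: ts) I)
theorem map_red_subList_map_red (l : List PTree) (I : Finset ℕ) :
    (subList (l.map red) I).map red = (subList l I).map red := by
  match l with
  | [] => rw [List.map_nil]
  | t :: ts =>
    rw [List.map_cons, subList_cons, subList_cons, List.map_append, List.map_append, deg_red,
      map_red_subList_map_red ts]
    split_ifs
    · rw [List.map_singleton, List.map_singleton, red_sub_red t]
    · rfl
end

mutual
theorem sub_sub (T : PTree) {I J : Finset ℕ} (hIJ : I ⊆ J) :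
    sub (sub T J) (I.image (rank J)) = sub T I := by
  match T with
  | node l => rw [sub_node, sub_node, sub_node, subList_subList l hIJ]
theorem subList_subList (l : List PTree) {I J : Finset ℕ} (hIJ : I ⊆ J) :
    subList (subList l J) (I.image (rank J)) = subList l I := by
  match l with
  | [] => rw [subList_nil, subList_nil, subList_nil]
  | t :: ts =>
    have htail := subList_subList ts (shift_mono (d := t.deg) hIJ)
    rw [subList_cons t ts J, subList_cons t ts I]
    by_cases hJ : (J.filter (· < t.deg)).Nonempty
    · have hdeg : (sub t (J.filter (· < t.deg))).deg = rank J t.deg := by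
        rw [deg_sub, rank_filter_lt le_rfl, max_eq_right hJ.card_pos]
      rw [if_pos hJ, List.singleton_append, subList_cons, hdeg, filter_image_rank hIJ,
        shift_image_rank hIJ, htail]
      simp only [Finset.image_nonempty]
      split_ifs with hI
      · rw [sub_sub t (Finset.filter_subset_filter _ hIJ)]
      · rfl
    · have hJ' := Finset.not_nonempty_iff_eq_empty.mp hJ
      have hI : I.filter (· < t.deg) = ∅ :=
        Finset.subset_empty.mp (hJ' ▸ Finset.filter_subset_filter _ hIJ)
      have hrank : rank J t.deg = 0 := by rw [rank, hJ', Finset.card_empty]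
      rw [if_neg hJ, hI, if_neg Finset.not_nonempty_empty, List.nil_append, List.nil_append,
        ← htail, ← shift_image_rank hIJ, hrank, shift_zero]
end

theorem contract_of_nonempty {T : PTree} {I : Finset ℕ} (hI : I.Nonempty) :
    T.contract I = some (red (sub T I)) :=
  if_neg hI.ne_empty

end PTree

/-- Let `V` be a finite planar reduced rooted tree and `I ⊆ J ⊆ L(V)` with
`I, J` nonempty.  Let `ι : J → L(V|J)` be the unique order-preserving bijection (in leaf
coordinates, `ι a = #{b ∈ J | b < a}`).  Then `(V|J)|ι(I) = V|I`. -/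
theorem contract_contract (V : PTree) (hV : V.Reduced) (I J : Finset ℕ)
    (hIJ : I ⊆ J) (hJ : J ⊆ Finset.range V.deg) (hne : I.Nonempty) :
    ∃ W : PTree, V.contract J = some W ∧
      W.contract (I.image fun a => (J.filter (· < a)).card) = V.contract I := by
  refine ⟨PTree.red (PTree.sub V J), PTree.contract_of_nonempty (hne.mono hIJ), ?_⟩
  change (PTree.red (PTree.sub V J)).contract (I.image (PTree.rank J)) = _
  rw [PTree.contract_of_nonempty (hne.image _), PTree.contract_of_nonempty hne,
    PTree.red_sub_red, PTree.sub_sub V hIJ]
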